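/- arXiv:2005.11486 — 7 statements merged into one kernel-verified Lean document; each statement's English description precedes it below -/
import Mathlib

section
/- For all real numbers q, q1, q2 with 0 < q1 < q2 < q ≤ 2, it is impossible that both sin((q-q2)π/2)/sin((q-q1)π/2) > sin(q2·π/2)/sin(q1·π/2) holds; equivalently, sin((q-q2)π/2)·sin(q1·π/2) - sin((q-q1)π/2)·sin(q2·π/2) ≤ 0. -/
open Real

theorem stmt_0 (q q1 q2 : ℝ) (h1 : 0 < q1) (h2 : q1 < q2) (h3 : q2 < q) (h4 : q ≤ 2) :
    Real.sin ((q - q2) * Real.pi / 2) * Real.sin (q1 * Real.pi / 2) -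
      Real.sin ((q - q1) * Real.pi / 2) * Real.sin (q2 * Real.pi / 2) ≤ 0 := by
  have hpi := Real.pi_pos
  have key : Real.sin ((q - q2) * Real.pi / 2) * Real.sin (q1 * Real.pi / 2) -
      Real.sin ((q - q1) * Real.pi / 2) * Real.sin (q2 * Real.pi / 2)
      = -(Real.sin (q * Real.pi / 2) * Real.sin ((q2 - q1) * Real.pi / 2)) := by
    have e1 : (q - q2) * Real.pi / 2 = q * Real.pi / 2 - q2 * Real.pi / 2 := by ring
    have e2 : (q - q1) * Real.pi / 2 = q * Real.pi / 2 - q1 * Real.pi / 2 := by ring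
    have e3 : (q2 - q1) * Real.pi / 2 = q2 * Real.pi / 2 - q1 * Real.pi / 2 := by ring
    rw [e1, e2, e3, Real.sin_sub, Real.sin_sub, Real.sin_sub]
    ring
  rw [key]
  have h5 : 0 ≤ Real.sin (q * Real.pi / 2) := by
    apply Real.sin_nonneg_of_nonneg_of_le_pi
    · nlinarith
    · nlinarith
  have h6 : 0 < Real.sin ((q2 - q1) * Real.pi / 2) := by
    apply Real.sin_pos_of_pos_of_lt_pi
    · nlinarith
    · nlinarith
  nlinarith
end

section
/- The function w(x) = x·ln(x/sin x), extended by w(0)=0, is strictly superadditive on (0, π): for all 0 < x < y < π, w(x) + w(y - x) < w(y). -/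
/-!
`w` is strictly convex on `[0, π)`: it is continuous there because `w x = -(x * log (sinc x))`,
and on `(0, π)` its second derivative is `((x - sin x cos x)² + sin⁴ x) / (x sin² x) > 0`.
A strictly convex function with `f 0 ≤ 0` is strictly superadditive, since the secant
slope `(f a - f 0) / a` is strictly increasing in `a`.
-/

open Real

/-- The function `w(x) = x · ln(x / sin x)` (extended by `w 0 = 0`). -/
noncomputable def w (x : ℝ) : ℝ := x * Real.log (x / Real.sin x)

open Set

theorem StrictConvexOn.add_lt_map_add {𝕜 : Type*} [Field 𝕜] [LinearOrder 𝕜]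
    [IsStrictOrderedRing 𝕜] {s : Set 𝕜} {f : 𝕜 → 𝕜} (hf : StrictConvexOn 𝕜 s f)
    (h0 : (0 : 𝕜) ∈ s) (hf0 : f 0 ≤ 0) {a b : 𝕜} (ha : 0 < a) (hb : 0 < b) (hab : a + b ∈ s) :
    f a + f b < f (a + b) := by
  have hfa := hf.secant_strict_mono_aux1 h0 hab ha (lt_add_of_pos_right a hb)
  have hfb := hf.secant_strict_mono_aux1 h0 hab hb (lt_add_of_pos_left b ha)
  simp only [sub_zero, add_sub_cancel_left, add_sub_cancel_right] at hfa hfb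
  have hab0 : 0 < a + b := add_pos ha hb
  have h : (a + b) * (f a + f b) < (a + b) * f (a + b) := by nlinarith
  exact lt_of_mul_lt_mul_left h hab0.le

theorem w_eq_neg_mul_log_sinc (x : ℝ) : w x = -(x * log (sinc x)) := by
  rcases eq_or_ne x 0 with rfl | hx
  · simp [w]
  · rw [w, sinc_of_ne_zero hx, ← mul_neg, ← log_inv, inv_div]

theorem continuousOn_w : ContinuousOn w (Ico 0 π) := by
  have hsinc : ∀ x ∈ Ico 0 π, sinc x ≠ 0 := by
    rintro x ⟨hx0, hxπ⟩
    rcases hx0.eq_or_lt with rfl | hx0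
    · simp
    · rw [sinc_of_ne_zero hx0.ne']
      exact (div_pos (sin_pos_of_pos_of_lt_pi hx0 hxπ) hx0).ne'
  simp_rw [funext w_eq_neg_mul_log_sinc]
  exact (continuousOn_id.mul (continuous_sinc.continuousOn.log hsinc)).neg

noncomputable def w' (x : ℝ) : ℝ := log (x / sin x) + 1 - x * cos x / sin x

/-- This is `1 / x - 2 cos x / sin x + x / sin² x`, written so that its sign on `(0, π)` is
evident. -/
noncomputable def w'' (x : ℝ) : ℝ := ((x - sin x * cos x) ^ 2 + sin x ^ 4) / (x * sin x ^ 2)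

theorem hasDerivAt_w {x : ℝ} (hx : 0 < x) (hxπ : x < π) : HasDerivAt w (w' x) x := by
  have hs := sin_pos_of_pos_of_lt_pi hx hxπ
  refine ((hasDerivAt_id' x).mul (((hasDerivAt_id' x).div (hasDerivAt_sin x) hs.ne').log
    (div_pos hx hs).ne')).congr_deriv ?_
  simp only [w', Pi.div_apply]
  field_simp
  ring

theorem hasDerivAt_w' {x : ℝ} (hx : 0 < x) (hxπ : x < π) : HasDerivAt w' (w'' x) x := by
  have hs := sin_pos_of_pos_of_lt_pi hx hxπ
  refine (((((hasDerivAt_id' x).div (hasDerivAt_sin x) hs.ne').log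
    (div_pos hx hs).ne').add_const 1).sub
    (((hasDerivAt_id' x).mul (hasDerivAt_cos x)).div (hasDerivAt_sin x) hs.ne')).congr_deriv ?_
  simp only [w'', Pi.div_apply, Pi.mul_apply]
  field_simp
  linear_combination (x ^ 2 - sin x ^ 2) * sin_sq_add_cos_sq x

theorem w''_pos {x : ℝ} (hx : 0 < x) (hxπ : x < π) : 0 < w'' x := by
  have hs := sin_pos_of_pos_of_lt_pi hx hxπ
  unfold w''
  positivity

theorem strictConvexOn_w : StrictConvexOn ℝ (Ico 0 π) w := by
  refine strictConvexOn_of_deriv2_pos (convex_Ico 0 π) continuousOn_w fun x hx ↦ ?_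
  rw [interior_Ico] at hx
  have hderiv : deriv w =ᶠ[nhds x] w' := by
    filter_upwards [isOpen_Ioo.mem_nhds hx] with t ht using (hasDerivAt_w ht.1 ht.2).deriv
  rw [Function.iterate_succ_apply, Function.iterate_one, hderiv.deriv_eq,
    (hasDerivAt_w' hx.1 hx.2).deriv]
  exact w''_pos hx.1 hx.2

theorem stmt_2 (x y : ℝ) (hx : 0 < x) (hxy : x < y) (hy : y < Real.pi) :
    w x + w (y - x) < w y := by
  have hy' : x + (y - x) ∈ Ico 0 π := by
    rw [add_sub_cancel]
    exact ⟨(hx.trans hxy).le, hy⟩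
  have h := strictConvexOn_w.add_lt_map_add ⟨le_rfl, pi_pos⟩ (by simp [w]) hx (sub_pos.2 hxy) hy'
  rwa [add_sub_cancel] at h
end

section
/- The function x ↦ x·ln(x/sin x) is convex on the interval (0, π). -/
/-!
On `(0, π)` write `x * log (x / sin x) = x * log x - x * log (sin x)`. Its second derivative is
`1/x - 2 cot x + x / sin² x = ((x - sin x cos x)² + sin⁴ x) / (x sin² x)`, which is positive
for `x > 0`; the numerator identity is just `sin² x + cos² x = 1`.
-/

open Real Set

lemma hasDerivAt_mul_log_sub_mul_log_sin {x : ℝ} (hx : x ≠ 0) (hs : sin x ≠ 0) :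
    HasDerivAt (fun y => y * log y - y * log (sin y))
      (log x + 1 - log (sin x) - x * (cos x / sin x)) x := by
  have hlog_sin : HasDerivAt (fun y => log (sin y)) (cos x / sin x) x :=
    (hasDerivAt_sin x).log hs
  exact ((hasDerivAt_mul_log hx).sub ((hasDerivAt_id' x).mul hlog_sin)).congr_deriv (by ring)

lemma hasDerivAt_log_add_one_sub_log_sin_sub_mul_cos_div_sin {x : ℝ} (hx : x ≠ 0)
    (hs : sin x ≠ 0) :
    HasDerivAt (fun y => log y + 1 - log (sin y) - y * (cos y / sin y))
      (x⁻¹ - 2 * (cos x / sin x) + x / sin x ^ 2) x := by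
  have hlog_sin : HasDerivAt (fun y => log (sin y)) (cos x / sin x) x :=
    (hasDerivAt_sin x).log hs
  have hcot : HasDerivAt (fun y => cos y / sin y) (-1 / sin x ^ 2) x := by
    refine ((hasDerivAt_cos x).div (hasDerivAt_sin x) hs).congr_deriv ?_
    rw [← sin_sq_add_cos_sq x]
    ring
  refine ((((hasDerivAt_log hx).add_const 1).sub hlog_sin).sub
    ((hasDerivAt_id' x).mul hcot)).congr_deriv ?_
  field_simp
  ring

lemma inv_sub_two_mul_cos_div_sin_add_div_sin_sq {x : ℝ} (hx : x ≠ 0) (hs : sin x ≠ 0) :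
    x⁻¹ - 2 * (cos x / sin x) + x / sin x ^ 2 =
      ((x - sin x * cos x) ^ 2 + sin x ^ 4) / (x * sin x ^ 2) := by
  field_simp
  linear_combination (-sin x ^ 2) * sin_sq_add_cos_sq x

theorem stmt_3 :
    ConvexOn ℝ (Set.Ioo 0 Real.pi) (fun x : ℝ => x * Real.log (x / Real.sin x)) := by
  have hx : ∀ x ∈ Ioo 0 π, x ≠ 0 := fun x hx => hx.1.ne'
  have hs : ∀ x ∈ Ioo 0 π, sin x ≠ 0 := fun x hx => (sin_pos_of_pos_of_lt_pi hx.1 hx.2).ne'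
  have hsplit : EqOn (fun x => x * log x - x * log (sin x))
      (fun x => x * log (x / sin x)) (Ioo 0 π) := fun x hxI => by
    simp only [log_div (hx x hxI) (hs x hxI)]
    ring
  refine ConvexOn.congr ?_ hsplit
  refine convexOn_of_hasDerivWithinAt2_nonneg (convex_Ioo 0 π)
    (f' := fun x => log x + 1 - log (sin x) - x * (cos x / sin x))
    (f'' := fun x => x⁻¹ - 2 * (cos x / sin x) + x / sin x ^ 2)
    (fun x hxI => (hasDerivAt_mul_log_sub_mul_log_sin (hx x hxI) (hs x hxI)).continuousAt
      |>.continuousWithinAt) ?_ ?_ ?_ <;> rw [interior_Ioo] <;> intro x hxI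
  · exact (hasDerivAt_mul_log_sub_mul_log_sin (hx x hxI) (hs x hxI)).hasDerivWithinAt
  · exact (hasDerivAt_log_add_one_sub_log_sin_sub_mul_cos_div_sin (hx x hxI)
      (hs x hxI)).hasDerivWithinAt
  · rw [inv_sub_two_mul_cos_div_sin_add_div_sin_sq (hx x hxI) (hs x hxI)]
    have hx_pos : 0 < x := hxI.1
    positivity
end

section
/- With ρ and h as in the parametrization of the stability boundary curve, for 0 < q1 < q2 < q ≤ 2 the function ω ↦ h(ω, q2, q1, q) = ω^(-q2/q)·[ω·ρ(q-q1, q1-q2) - ρ(q1, q1-q2)] is strictly decreasing on (0, ∞). -/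
/-!
With `s = q2 / q ∈ (0, 1)` the function is `A ω^(1-s) - B ω^(-s)` where `A = ρ(q-q1, q1-q2)` and
`B = ρ(q1, q1-q2)`. All sine arguments lie in `(-π, π)`, so `A, B < 0`: the first term is antitone
and the second strictly antitone.
-/

open Real

/-- `ρ(a,b) = sin(aπ/2)/sin(bπ/2)`. -/
noncomputable def rho (a b : ℝ) : ℝ := Real.sin (a * Real.pi / 2) / Real.sin (b * Real.pi / 2)

lemma sin_mul_pi_div_two_pos {x : ℝ} (h0 : 0 < x) (h2 : x < 2) : 0 < sin (x * π / 2) :=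
  sin_pos_of_pos_of_lt_pi (by positivity) (by linarith [pi_pos, mul_lt_mul_of_pos_right h2 pi_pos])

lemma rho_neg {a b : ℝ} (ha0 : 0 < a) (ha2 : a < 2) (hb0 : b < 0) (hb2 : -2 < b) :
    rho a b < 0 := by
  have hden : sin (b * π / 2) < 0 := by
    have := sin_mul_pi_div_two_pos (neg_pos.2 hb0) (by linarith)
    rwa [neg_mul, neg_div, sin_neg, neg_pos] at this
  exact div_neg_of_pos_of_neg (sin_mul_pi_div_two_pos ha0 ha2) hden

theorem strictAntiOn_rpow_neg_mul_sub {s A B : ℝ} (hs0 : 0 < s) (hs1 : s ≤ 1) (hA : A ≤ 0)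
    (hB : B < 0) : StrictAntiOn (fun x : ℝ => x ^ (-s) * (x * A - B)) (Set.Ioi 0) := by
  have hpow : AntitoneOn (fun x : ℝ => A * x ^ (1 - s)) (Set.Ioi 0) := fun x hx y _ hxy =>
    mul_le_mul_of_nonpos_left (rpow_le_rpow hx.le hxy (by linarith)) hA
  have hneg : StrictAntiOn (fun x : ℝ => -B * x ^ (-s)) (Set.Ioi 0) := fun x hx y hy hxy =>
    mul_lt_mul_of_pos_left (strictAntiOn_rpow_Ioi_of_exponent_neg (neg_neg_of_pos hs0) hx hy hxy)
      (neg_pos.2 hB)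
  refine (hpow.add_strictAnti hneg).congr fun x (hx : 0 < x) => ?_
  dsimp only
  rw [show 1 - s = -s + 1 by ring, rpow_add_one hx.ne']
  ring

theorem stmt_6 (q q1 q2 : ℝ) (h1 : 0 < q1) (h2 : q1 < q2) (h3 : q2 < q) (h4 : q ≤ 2) :
    StrictAntiOn
      (fun ω : ℝ => ω ^ (-(q2 / q)) * (ω * rho (q - q1) (q1 - q2) - rho q1 (q1 - q2)))
      (Set.Ioi 0) := by
  have hq : 0 < q := by linarith
  refine strictAntiOn_rpow_neg_mul_sub (div_pos (by linarith) hq) ((div_le_one hq).2 h3.le)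
    (rho_neg ?_ ?_ ?_ ?_).le (rho_neg ?_ ?_ ?_ ?_) <;> linarith
end

section
/- Let 0 < q1 < q2 < q ≤ 2, α > 0, β > 0, γ > 0. Then the characteristic function Δ(s) = s^q + α·s^{q1} + β·s^{q2} + γ has no root s ∈ ℂ with Re(s) ≥ 0, where complex powers are taken with the principal branch. -/
/-!
On the closed right half-plane `|arg s| ≤ π/2`, so for `0 < p ≤ 2` the angle `p · arg s` of `s ^ p`
stays in `[-π, π]` and `Im (s ^ p)` has the sign of `arg s`, strictly so when `p < 2`. Hence, off
the positive real axis, `arg s · Im Δ(s) > 0`; on it, every term of `Δ(s)` is real and `γ > 0`.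
-/

open Real Complex

lemma Real.mul_sin_self_nonneg {x : ℝ} (hx : |x| ≤ π) : 0 ≤ x * sin x := by
  rcases le_total 0 x with h | h
  · exact mul_nonneg h (sin_nonneg_of_nonneg_of_le_pi h (abs_le.mp hx).2)
  · exact mul_nonneg_of_nonpos_of_nonpos h (sin_nonpos_of_nonpos_of_neg_pi_le h (abs_le.mp hx).1)

lemma Real.mul_sin_self_pos {x : ℝ} (hx0 : x ≠ 0) (hx : |x| < π) : 0 < x * sin x := by
  rcases hx0.lt_or_gt with h | h
  · exact mul_pos_of_neg_of_neg h (sin_neg_of_neg_of_neg_pi_lt h (abs_lt.mp hx).1)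
  · exact mul_pos h (sin_pos_of_pos_of_lt_pi h (abs_lt.mp hx).2)

namespace Complex

lemma arg_mul_im_cpow_eq {s : ℂ} {p : ℝ} (hp : p ≠ 0) :
    s.arg * (s ^ (p : ℂ)).im = ‖s‖ ^ p / p * (s.arg * p * Real.sin (s.arg * p)) := by
  rw [cpow_ofReal_im]
  field_simp

lemma abs_arg_mul_le {s : ℂ} (hs : 0 ≤ s.re) {p : ℝ} (hp0 : 0 < p) :
    |s.arg * p| ≤ π / 2 * p := by
  rw [abs_mul, abs_of_pos hp0]
  exact mul_le_mul_of_nonneg_right (abs_arg_le_pi_div_two_iff.mpr hs) hp0.le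

lemma arg_mul_im_cpow_nonneg {s : ℂ} (hs : 0 ≤ s.re) {p : ℝ} (hp0 : 0 < p) (hp : p ≤ 2) :
    0 ≤ s.arg * (s ^ (p : ℂ)).im := by
  have hangle : |s.arg * p| ≤ π := by nlinarith [abs_arg_mul_le hs hp0, pi_pos]
  rw [arg_mul_im_cpow_eq hp0.ne']
  exact mul_nonneg (by positivity) (mul_sin_self_nonneg hangle)

lemma arg_mul_im_cpow_pos {s : ℂ} (hs : 0 ≤ s.re) (harg : s.arg ≠ 0) {p : ℝ} (hp0 : 0 < p)
    (hp : p < 2) : 0 < s.arg * (s ^ (p : ℂ)).im := by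
  have hs0 : s ≠ 0 := by rintro rfl; exact harg arg_zero
  have hangle : |s.arg * p| < π := by nlinarith [abs_arg_mul_le hs hp0, pi_pos]
  rw [arg_mul_im_cpow_eq hp0.ne']
  exact mul_pos (by positivity) (mul_sin_self_pos (mul_ne_zero harg hp0.ne') hangle)

end Complex

theorem stmt_11 (q q1 q2 α β γ : ℝ) (h1 : 0 < q1) (h2 : q1 < q2) (h3 : q2 < q) (h4 : q ≤ 2)
    (hα : 0 < α) (hβ : 0 < β) (hγ : 0 < γ) :
    ∀ s : ℂ, 0 ≤ s.re →
      s ^ (q : ℂ) + (α : ℂ) * s ^ (q1 : ℂ) + (β : ℂ) * s ^ (q2 : ℂ) + (γ : ℂ) ≠ 0 := by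
  intro s hs hΔ
  rcases eq_or_ne s.arg 0 with harg | harg
  · obtain ⟨hre, him⟩ := arg_eq_zero_iff.mp harg
    have hs_real : s = (s.re : ℂ) := Complex.ext rfl (by simp [him])
    rw [hs_real, ← ofReal_cpow hre, ← ofReal_cpow hre, ← ofReal_cpow hre] at hΔ
    have hpos : 0 < s.re ^ q + α * s.re ^ q1 + β * s.re ^ q2 + γ := by positivity
    exact hpos.ne' (by exact_mod_cast hΔ)
  · have him := congrArg (fun z ↦ s.arg * z.im) hΔ
    simp only [add_im, mul_im, ofReal_re, ofReal_im, zero_mul, add_zero, zero_im, mul_zero] at him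
    linarith [arg_mul_im_cpow_nonneg hs (by linarith) h4,
      mul_pos hα (arg_mul_im_cpow_pos hs harg h1 (by linarith)),
      mul_nonneg hβ.le (arg_mul_im_cpow_nonneg hs (h1.trans h2) (by linarith))]
end

section
/- Let γ > 0 and 0 < q1 < q2 < q ≤ 2 be fixed, with α, β real. The set of roots s of Δ(s) = s^q + α·s^{q1} + β·s^{q2} + γ (principal branch, domain ℂ \ (-∞,0]) with Re(s) ≥ 0 is finite. -/
open Real Complex

open Filter Asymptotics Bornology

/-! Δ is continuous on the closed right half-plane, analytic on the slit plane, and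
Δ(s) ~ s^q as |s| → ∞ because q1, q2 and 0 are all below q. So the roots with Re s ≥ 0 form a
compact set, which avoids 0 since Δ(0) = γ ≠ 0 and hence lies in the slit plane. Δ has no roots
on large positive reals, so it does not vanish identically there, and by the identity theorem its
zeros cannot accumulate in that compact set. -/

theorem AnalyticOnNhd.finite_zeros_of_isCompact {𝕜 E : Type*} [NontriviallyNormedField 𝕜]
    [NormedAddCommGroup E] [NormedSpace 𝕜 E] {f : 𝕜 → E} {U K : Set 𝕜} {z : 𝕜}
    (hf : AnalyticOnNhd 𝕜 f U) (hU : IsPreconnected U) (hz : z ∈ U) (hfz : f z ≠ 0)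
    (hK : IsCompact K) (hKU : K ⊆ U) : {x ∈ K | f x = 0}.Finite := by
  have hne : ∀ᶠ x in codiscreteWithin U, f x ≠ 0 :=
    (hf.eqOn_zero_or_eventually_ne_zero_of_preconnected hU).resolve_left fun h ↦ hfz (h hz)
  exact (hK.finite_sdiff_of_mem_codiscreteWithin (codiscreteWithin_mono hKU hne)).subset
    fun x hx ↦ ⟨hx.1, not_not.2 hx.2⟩

theorem Asymptotics.IsLittleO.eventually_add_ne_zero {α E : Type*} [NormedAddCommGroup E]
    {l : Filter α} {f g : α → E} (h : g =o[l] f) (hf : ∀ᶠ x in l, f x ≠ 0) :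
    ∀ᶠ x in l, f x + g x ≠ 0 := by
  filter_upwards [h.bound one_half_pos, hf] with x hgx hfx hsum
  rw [← neg_eq_of_add_eq_zero_right hsum, norm_neg] at hgx
  have := norm_pos_iff.2 hfx
  linarith

theorem Real.isLittleO_rpow_rpow_atTop {p q : ℝ} (hpq : p < q) :
    (fun x : ℝ ↦ x ^ p) =o[atTop] fun x ↦ x ^ q := by
  have hpos : ∀ᶠ x : ℝ in atTop, 0 < x := eventually_gt_atTop 0
  rw [isLittleO_iff_tendsto' (hpos.mono fun x hx h ↦ absurd h (rpow_pos_of_pos hx q).ne')]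
  refine (tendsto_rpow_neg_atTop (sub_pos.2 hpq)).congr' (hpos.mono fun x hx ↦ ?_)
  rw [neg_sub, rpow_sub hx]

theorem Complex.isLittleO_cpow_cpow_cobounded {p q : ℝ} (hpq : p < q) :
    (fun s : ℂ ↦ s ^ (p : ℂ)) =o[cobounded ℂ] fun s ↦ s ^ (q : ℂ) := by
  rw [← isLittleO_norm_norm]
  simpa only [norm_cpow_real, Function.comp_def] using
    (Real.isLittleO_rpow_rpow_atTop hpq).comp_tendsto tendsto_norm_cobounded_atTop

theorem Complex.eventually_cobounded_cpow_add_ne_zero {q q1 q2 : ℝ} (α β γ : ℂ) (h1 : q1 < q)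
    (h2 : q2 < q) (hq : 0 < q) :
    ∀ᶠ s in cobounded ℂ, s ^ (q : ℂ) + α * s ^ (q1 : ℂ) + β * s ^ (q2 : ℂ) + γ ≠ 0 := by
  -- the constant term is written as γ * s ^ 0
  have hlower : (fun s : ℂ ↦ α * s ^ (q1 : ℂ) + β * s ^ (q2 : ℂ) + γ * s ^ ((0 : ℝ) : ℂ))
      =o[cobounded ℂ] fun s ↦ s ^ (q : ℂ) :=
    (((isLittleO_cpow_cpow_cobounded h1).const_mul_left _).add
      ((isLittleO_cpow_cpow_cobounded h2).const_mul_left _)).add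
      ((isLittleO_cpow_cpow_cobounded hq).const_mul_left _)
  have hnz : ∀ᶠ s in cobounded ℂ, s ^ (q : ℂ) ≠ 0 :=
    (eventually_ne_cobounded 0).mono fun s hs ↦ by simp [cpow_eq_zero_iff, hs]
  filter_upwards [hlower.eventually_add_ne_zero hnz] with s hs
  simpa [add_assoc] using hs

theorem Complex.continuousOn_cpow_const_of_re_pos {w : ℂ} (hw : 0 < w.re) :
    ContinuousOn (fun s : ℂ ↦ s ^ w) {s | 0 ≤ s.re} :=
  fun _ hz ↦ (continuousAt_cpow_const_of_re_pos (Or.inl hz) hw).continuousWithinAt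

theorem Complex.mem_slitPlane_of_re_nonneg {z : ℂ} (hre : 0 ≤ z.re) (hz : z ≠ 0) :
    z ∈ slitPlane := by
  rw [mem_slitPlane_iff]
  by_contra! h
  exact hz (Complex.ext (le_antisymm h.1 hre) h.2)

theorem Complex.isPreconnected_slitPlane : IsPreconnected slitPlane :=
  (starConvex_one_slitPlane.isPathConnected one_mem_slitPlane).isConnected.isPreconnected

theorem stmt_17_general (q q1 q2 α β γ : ℝ) (h1 : 0 < q1) (h2 : q1 < q2) (h3 : q2 < q)
    (hγ : 0 < γ) :
    Set.Finite {s : ℂ | 0 ≤ s.re ∧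
      s ^ (q : ℂ) + (α : ℂ) * s ^ (q1 : ℂ) + (β : ℂ) * s ^ (q2 : ℂ) + (γ : ℂ) = 0} := by
  set Δ : ℂ → ℂ := fun s ↦ s ^ (q : ℂ) + α * s ^ (q1 : ℂ) + β * s ^ (q2 : ℂ) + γ
  have hq2 : 0 < q2 := h1.trans h2
  have hq : 0 < q := hq2.trans h3
  have hΔ0 : Δ 0 ≠ 0 := by
    simp [Δ, zero_cpow, hq.ne', h1.ne', hq2.ne', hγ.ne']
  have hΔ_far : ∀ᶠ s in cobounded ℂ, Δ s ≠ 0 :=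
    eventually_cobounded_cpow_add_ne_zero α β γ (h2.trans h3) h3 hq
  have hΔ_cont : ContinuousOn Δ {s | 0 ≤ s.re} := by
    have hpow : ∀ p : ℝ, 0 < p → ContinuousOn (fun s : ℂ ↦ s ^ (p : ℂ)) {s | 0 ≤ s.re} :=
      fun p hp ↦ continuousOn_cpow_const_of_re_pos (by simpa)
    exact (((hpow q hq).add (continuousOn_const.mul (hpow q1 h1))).add
      (continuousOn_const.mul (hpow q2 hq2))).add continuousOn_const
  have hΔ_an : AnalyticOnNhd ℂ Δ slitPlane := fun z hz ↦ by fun_prop (disch := assumption)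
  set S := {s : ℂ | 0 ≤ s.re ∧ Δ s = 0}
  have hS_compact : IsCompact S :=
    Metric.isCompact_of_isClosed_isBounded
      (hΔ_cont.preimage_isClosed_of_isClosed (isClosed_le continuous_const continuous_re)
        isClosed_singleton)
      ((isBounded_def.2 hΔ_far).subset fun s hs ↦ hs.2)
  have hS_slit : S ⊆ slitPlane := fun s hs ↦
    mem_slitPlane_of_re_nonneg hs.1 fun h ↦ hΔ0 (h ▸ hs.2)
  obtain ⟨t, hΔt, ht⟩ := (((RCLike.tendsto_ofReal_atTop_cobounded ℂ).eventually hΔ_far).and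
    (eventually_gt_atTop 0)).exists
  exact (hΔ_an.finite_zeros_of_isCompact isPreconnected_slitPlane (ofReal_mem_slitPlane.2 ht) hΔt
    hS_compact hS_slit).subset fun s hs ↦ ⟨hs, hs.2⟩

theorem stmt_17 (q q1 q2 α β γ : ℝ) (h1 : 0 < q1) (h2 : q1 < q2) (h3 : q2 < q) (h4 : q ≤ 2)
    (hγ : 0 < γ) :
    Set.Finite {s : ℂ | 0 ≤ s.re ∧
      s ^ (q : ℂ) + (α : ℂ) * s ^ (q1 : ℂ) + (β : ℂ) * s ^ (q2 : ℂ) + (γ : ℂ) = 0} :=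
  stmt_17_general q q1 q2 α β γ h1 h2 h3 hγ
end

section
/- For the Basset equation s + α·s^{q1} + γ = 0 with 0 < q1 < 1 and γ > 0, the characteristic equation has a pair of purely imaginary roots s = ±iδ (δ > 0) if and only if α = α*(γ, q1) := -γ^{1-q1}·(cot(q1π/2))^{q1}·sec(q1π/2). -/
/-!
Since the principal power `s ↦ s ^ q` commutes with conjugation off the negative real axis,
`-iδ` is a root exactly when `iδ` is. Writing `(iδ) ^ q = δ ^ q e^{iθ}` with `θ = qπ/2`, the real
and imaginary parts of the equation read `α δ ^ q cos θ = -γ` and `δ = -α δ ^ q sin θ`. Dividing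
forces `δ = γ tan θ`, and then `α = -γ / ((γ tan θ) ^ q cos θ)`, which is the stated critical value.
-/

section
open Complex ComplexConjugate

theorem cpow_ofReal_eq_norm_rpow_mul_exp {z : ℂ} (hz : z ≠ 0) (q : ℝ) :
    z ^ (q : ℂ) = ((‖z‖ ^ q : ℝ) : ℂ) * exp ((q * arg z : ℝ) * I) := by
  rw [cpow_def_of_ne_zero hz, Complex.log, add_mul, Complex.exp_add,
    Real.rpow_def_of_pos (norm_pos_iff.mpr hz)]
  push_cast
  ring_nf

theorem I_mul_ofReal_cpow {δ : ℝ} (hδ : 0 < δ) (q : ℝ) :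
    (I * δ) ^ (q : ℂ) = ((δ ^ q : ℝ) : ℂ) * exp ((q * Real.pi / 2 : ℝ) * I) := by
  rw [cpow_ofReal_eq_norm_rpow_mul_exp (by simp [hδ.ne']), mul_comm I, arg_real_mul _ hδ, arg_I,
    mul_div_assoc]
  simp [abs_of_pos hδ]

noncomputable def bassetChar (α γ q : ℝ) (s : ℂ) : ℂ := s + α * s ^ (q : ℂ) + γ

theorem bassetChar_conj (α γ q : ℝ) {s : ℂ} (hs : arg s ≠ Real.pi) :
    bassetChar α γ q (conj s) = conj (bassetChar α γ q s) := by
  simp [bassetChar, conj_cpow _ _ hs]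

theorem bassetChar_I_mul_eq_zero_iff (α γ q : ℝ) {δ : ℝ} (hδ : 0 < δ) :
    bassetChar α γ q (I * δ) = 0 ↔
      α * δ ^ q * Real.cos (q * Real.pi / 2) + γ = 0 ∧
        δ + α * δ ^ q * Real.sin (q * Real.pi / 2) = 0 := by
  rw [bassetChar, I_mul_ofReal_cpow hδ, Complex.ext_iff]
  simp only [add_re, add_im, mul_re, mul_im, ofReal_re, ofReal_im, I_re, I_im,
    exp_ofReal_mul_I_re, exp_ofReal_mul_I_im, zero_re, zero_im]
  ring_nf

theorem bassetChar_neg_I_mul_eq_zero_iff (α γ q : ℝ) (δ : ℝ) :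
    bassetChar α γ q (-(I * δ)) = 0 ↔ bassetChar α γ q (I * δ) = 0 := by
  have harg : arg (I * δ) ≠ Real.pi := by simp [arg_eq_pi_iff]
  rw [show -(I * δ) = conj (I * δ) by simp, bassetChar_conj α γ q harg, map_eq_zero]

end

section
open Real

theorem rpow_one_sub_mul_inv_rpow_mul_mul_rpow {γ t : ℝ} (hγ : 0 < γ) (ht : 0 < t) (q : ℝ) :
    γ ^ (1 - q) * t⁻¹ ^ q * (γ * t) ^ q = γ := by
  rw [Real.rpow_sub hγ, Real.rpow_one, Real.inv_rpow ht.le, Real.mul_rpow hγ.le ht.le]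
  have hγq : 0 < γ ^ q := by positivity
  have htq : 0 < t ^ q := by positivity
  field_simp

theorem exists_pos_cos_sin_system_iff {q γ α θ : ℝ} (hγ : 0 < γ) (hθ₀ : 0 < θ) (hθ : θ < π / 2) :
    (∃ δ : ℝ, 0 < δ ∧ α * δ ^ q * cos θ + γ = 0 ∧ δ + α * δ ^ q * sin θ = 0) ↔
      α = -γ ^ (1 - q) * cot θ ^ q * (cos θ)⁻¹ := by
  have hcos : 0 < cos θ := cos_pos_of_mem_Ioo ⟨by linarith, hθ⟩
  have htan : 0 < tan θ := tan_pos_of_pos_of_lt_pi_div_two hθ₀ hθ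
  have hcot : cot θ = (tan θ)⁻¹ := by rw [cot_eq_cos_div_sin, tan_eq_sin_div_cos, inv_div]
  have hsin : sin θ = tan θ * cos θ := by rw [tan_eq_sin_div_cos]; field_simp
  have hscale : -γ ^ (1 - q) * cot θ ^ q * (cos θ)⁻¹ * (γ * tan θ) ^ q * cos θ = -γ := by
    calc _ = -(γ ^ (1 - q) * (tan θ)⁻¹ ^ q * (γ * tan θ) ^ q) * ((cos θ)⁻¹ * cos θ) := by
          rw [hcot]; ring
      _ = -γ := by rw [rpow_one_sub_mul_inv_rpow_mul_mul_rpow hγ htan q, inv_mul_cancel₀ hcos.ne', mul_one]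
  constructor
  · rintro ⟨δ, hδ, hre, him⟩
    have hδ_eq : δ = γ * tan θ := by
      rw [hsin] at him
      linear_combination him - tan θ * hre
    subst hδ_eq
    have hpos : (γ * tan θ) ^ q * cos θ ≠ 0 := by positivity
    refine mul_right_cancel₀ hpos ?_
    linear_combination hre - hscale
  · rintro rfl
    refine ⟨γ * tan θ, by positivity, by linear_combination hscale, ?_⟩
    rw [hsin]
    linear_combination tan θ * hscale

end

theorem stmt_19 (q1 γ α : ℝ) (h1 : 0 < q1) (h2 : q1 < 1) (hγ : 0 < γ) :
    (∃ δ : ℝ, 0 < δ ∧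
        (Complex.I * δ) + (α : ℂ) * (Complex.I * δ) ^ (q1 : ℂ) + (γ : ℂ) = 0 ∧
        (-(Complex.I * δ)) + (α : ℂ) * (-(Complex.I * δ)) ^ (q1 : ℂ) + (γ : ℂ) = 0) ↔
      α = -γ ^ (1 - q1) * (Real.cot (q1 * Real.pi / 2)) ^ q1 * (Real.cos (q1 * Real.pi / 2))⁻¹ := by
  change (∃ δ : ℝ, 0 < δ ∧ bassetChar α γ q1 (Complex.I * δ) = 0 ∧
    bassetChar α γ q1 (-(Complex.I * δ)) = 0) ↔ _
  simp_rw [bassetChar_neg_I_mul_eq_zero_iff, and_self]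
  rw [← exists_pos_cos_sin_system_iff hγ (by positivity) (by nlinarith [Real.pi_pos])]
  exact exists_congr fun δ => and_congr_right (bassetChar_I_mul_eq_zero_iff α γ q1)
end
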